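/- arXiv:1711.08625 — 2 statements merged into one kernel-verified Lean document; each statement's English description precedes it below -/
import Mathlib

section
/- Let p be a prime, M a finite group, P a Sylow p-subgroup of M, and N a normal p-subgroup of M with C_M(N) ≤ N. Let G = Park(M,P) be Park's group and ι : M → G Park's embedding. Then the centralizer C_G(ι(N)) of the image ι(N) in G is a p-group. -/
/-!
A normal `p`-subgroup lies in every Sylow `p`-subgroup, so `N ≤ P` and every `f` centralizing
`ι(N)` in `Park(M, P)` commutes with both left and right multiplication by `N`. Then
`d = f x * x⁻¹` centralizes `N`, hence lies in `N` because `C_M(N) ≤ N`, and `f` acts on the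
coset `N x` as left translation by `d`. Thus `f ^ |N| = 1`, and `|N|` is a power of `p`.
-/

/-- Park's group `Park(M, P)`: the group of bijections of `M` commuting with the
right multiplication action of `P`. -/
def parkGroup (M : Type*) [Group M] (P : Subgroup M) : Subgroup (Equiv.Perm M) where
  carrier := {f : Equiv.Perm M | ∀ (m u : M), u ∈ P → f (m * u) = f m * u}
  one_mem' := by intro m u _; rfl
  mul_mem' := by
    intro f g hf hg m u hu
    simp only [Equiv.Perm.mul_apply]
    rw [hg m u hu, hf _ u hu]
  inv_mem' := by
    intro f hf m u hu
    apply f.injective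
    simp [hf _ u hu]

/-- Park's embedding of `M` into `Park(M, P)`, sending `m` to left translation by `m`. -/
def parkEmbed (M : Type*) [Group M] (P : Subgroup M) : M →* ↥(parkGroup M P) where
  toFun m := ⟨Equiv.mulLeft m, fun x u _ => by simp [mul_assoc]⟩
  map_one' := by
    apply Subtype.ext
    ext x
    simp
  map_mul' m n := by
    apply Subtype.ext
    ext x
    simp [mul_assoc]

/-- `P` is a Sylow `p`-subgroup of a subgroup `H` of `G`. -/
def IsSylowIn (p : ℕ) {G : Type*} [Group G] (H P : Subgroup G) : Prop :=
  P ≤ H ∧ IsPGroup p P ∧ ∀ Q : Subgroup G, Q ≤ H → IsPGroup p Q → P ≤ Q → Q = P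

def IsSylowIn.toSylow {p : ℕ} {G : Type*} [Group G] {P : Subgroup G}
    (hP : IsSylowIn p ⊤ P) : Sylow p G where
  toSubgroup := P
  isPGroup' := hP.2.1
  is_maximal' hQ hPQ := hP.2.2 _ le_top hQ hPQ

section TranslationCommuting

variable {M : Type*} [Group M] {N : Subgroup M} {f : M → M}

theorem apply_mul_inv_mem_centralizer (hN : N.Normal)
    (hl : ∀ n ∈ N, ∀ x, f (n * x) = n * f x) (hr : ∀ n ∈ N, ∀ x, f (x * n) = f x * n) (x : M) :
    f x * x⁻¹ ∈ Subgroup.centralizer (N : Set M) := by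
  refine Subgroup.mem_centralizer_iff.mpr fun b hb => ?_
  have hconj : x⁻¹ * b * x ∈ N := by simpa using hN.conj_mem b hb x⁻¹
  have key : b * f x = f x * (x⁻¹ * b * x) := by
    rw [← hl b hb x, ← hr _ hconj x]
    group
  calc b * (f x * x⁻¹) = b * f x * x⁻¹ := by group
    _ = f x * (x⁻¹ * b * x) * x⁻¹ := by rw [key]
    _ = f x * x⁻¹ * b := by group

theorem iterate_apply_eq_pow_mul (hl : ∀ n ∈ N, ∀ x, f (n * x) = n * f x)
    (hd : ∀ x, f x * x⁻¹ ∈ N) (k : ℕ) (x : M) : f^[k] x = (f x * x⁻¹) ^ k * x := by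
  induction k with
  | zero => simp
  | succ k ih =>
    rw [Function.iterate_succ_apply', ih, hl _ (N.pow_mem (hd x) k), pow_succ]
    group

theorem iterate_card_eq_id [Finite N] (hl : ∀ n ∈ N, ∀ x, f (n * x) = n * f x)
    (hd : ∀ x, f x * x⁻¹ ∈ N) : f^[Nat.card N] = id := by
  funext x
  have hpow : (f x * x⁻¹) ^ Nat.card N = 1 := by
    have := pow_card_eq_one' (x := (⟨_, hd x⟩ : N))
    rwa [Subtype.ext_iff, Subgroup.coe_pow, Subgroup.coe_one] at this
  rw [iterate_apply_eq_pow_mul hl hd, hpow, one_mul, id]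

end TranslationCommuting

theorem apply_mul_of_mem_centralizer_map_parkEmbed {M : Type*} [Group M] {P N : Subgroup M}
    {f : parkGroup M P} (hf : f ∈ Subgroup.centralizer ((N.map (parkEmbed M P) : Subgroup _) :
      Set (parkGroup M P))) {n : M} (hn : n ∈ N) (x : M) :
    (f : Equiv.Perm M) (n * x) = n * (f : Equiv.Perm M) x := by
  have h := congrArg (fun g : parkGroup M P => (g : Equiv.Perm M) x)
    (Subgroup.mem_centralizer_iff.mp hf _ ⟨n, hn, rfl⟩)
  simpa [parkEmbed] using h.symm

/-- if `N` is a normal `p`-subgroup of `M` with `C_M(N) ≤ N` and `P` a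
Sylow `p`-subgroup of `M`, then the centralizer of `ι(N)` in Park's group
`G = Park(M, P)` is a `p`-group. -/
theorem statement9 (p : ℕ) [Fact p.Prime] (M : Type*) [Group M] [Finite M]
    (P : Subgroup M) (hsyl : IsSylowIn p ⊤ P)
    (N : Subgroup M) (hNnorm : N.Normal) (hNp : IsPGroup p N)
    (hNc : Subgroup.centralizer (N : Set M) ≤ N) :
    IsPGroup p (Subgroup.centralizer ((N.map (parkEmbed M P) : Subgroup ↥(parkGroup M P)) :
      Set ↥(parkGroup M P))) := by
  have hNP : N ≤ P := hNp.le_sylow_of_normal hsyl.toSylow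
  obtain ⟨k, hk⟩ := IsPGroup.iff_card.mp hNp
  rintro ⟨f, hf⟩
  have hl : ∀ n ∈ N, ∀ x, (f : Equiv.Perm M) (n * x) = n * (f : Equiv.Perm M) x :=
    fun n hn => apply_mul_of_mem_centralizer_map_parkEmbed hf hn
  have hr : ∀ n ∈ N, ∀ x, (f : Equiv.Perm M) (x * n) = (f : Equiv.Perm M) x * n :=
    fun n hn x => f.2 x n (hNP hn)
  have hd : ∀ x, (f : Equiv.Perm M) x * x⁻¹ ∈ N :=
    fun x => hNc (apply_mul_inv_mem_centralizer hNnorm hl hr x)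
  refine ⟨k, Subtype.ext <| Subtype.ext <| Equiv.Perm.ext fun x => ?_⟩
  simp only [Subgroup.coe_pow, Subgroup.coe_one, Equiv.Perm.coe_pow, Equiv.Perm.one_apply]
  rw [← hk, iterate_card_eq_id hl hd, id]
end

section
/- Let p be a prime and M = Qd(p), with V, α and P = V⟨α⟩ as below. Let t = ((1,0), I) ∈ M be the element of V corresponding to the vector (1,0). Then the centralizer C_M(t) of t in M equals P. -/
/-- `SL(2, p)`. -/
abbrev SL2 (p : ℕ) := Matrix.SpecialLinearGroup (Fin 2) (ZMod p)

/-- The additive automorphism of `ℤ/p × ℤ/p` (as `Fin 2 → ZMod p`) given by a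
matrix in `SL(2, p)` acting by matrix–vector multiplication. -/
def sl2AddAut (p : ℕ) (A : SL2 p) : AddAut (Fin 2 → ZMod p) where
  toFun v := (A : Matrix (Fin 2) (Fin 2) (ZMod p)).mulVec v
  invFun v := ((A⁻¹ : SL2 p) : Matrix (Fin 2) (Fin 2) (ZMod p)).mulVec v
  left_inv v := by
    show (_ : Matrix (Fin 2) (Fin 2) (ZMod p)).mulVec (Matrix.mulVec _ v) = v
    rw [Matrix.mulVec_mulVec, ← Matrix.SpecialLinearGroup.coe_mul, inv_mul_cancel,
      Matrix.SpecialLinearGroup.coe_one, Matrix.one_mulVec]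
  right_inv v := by
    show (_ : Matrix (Fin 2) (Fin 2) (ZMod p)).mulVec (Matrix.mulVec _ v) = v
    rw [Matrix.mulVec_mulVec, ← Matrix.SpecialLinearGroup.coe_mul, mul_inv_cancel,
      Matrix.SpecialLinearGroup.coe_one, Matrix.one_mulVec]
  map_add' v w := Matrix.mulVec_add _ v w

/-- The action of `SL(2, p)` on `ℤ/p × ℤ/p` as a homomorphism into the
(multiplicatively written) automorphism group. -/
def sl2Phi (p : ℕ) : SL2 p →* MulAut (Multiplicative (Fin 2 → ZMod p)) where
  toFun A := AddEquiv.toMultiplicative (sl2AddAut p A)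
  map_one' := by
    ext v
    simp [sl2AddAut]
  map_mul' A B := by
    ext v i
    simp [sl2AddAut, Matrix.mulVec_mulVec]
    fin_cases i <;> simp [Matrix.mul_apply, Fin.sum_univ_two] <;> ring

/-- The quadratic group `Qd(p) = (ℤ/p × ℤ/p) ⋊ SL(2, p)`. -/
abbrev Qd (p : ℕ) := SemidirectProduct (Multiplicative (Fin 2 → ZMod p)) (SL2 p) (sl2Phi p)

/-- The normal subgroup `V = ℤ/p × ℤ/p` of `Qd(p)`. -/
def QdV (p : ℕ) : Subgroup (Qd p) :=
  (SemidirectProduct.inl : Multiplicative (Fin 2 → ZMod p) →* Qd p).range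

/-- The unipotent matrix `α = [[1,1],[0,1]] ∈ SL(2,p)`. -/
def alphaSL (p : ℕ) : SL2 p :=
  ⟨!![1, 1; 0, 1], by simp [Matrix.det_fin_two_of]⟩

/-- The element `α` of `Qd(p)`. -/
def Qdalpha (p : ℕ) : Qd p := SemidirectProduct.inr (alphaSL p)

/-- The Sylow `p`-subgroup `P = V⟨α⟩` of `Qd(p)`. -/
def QdP (p : ℕ) : Subgroup (Qd p) := QdV p ⊔ Subgroup.zpowers (Qdalpha p)

/-- The central element `t = ((1,0), I)` of `P`. -/
def Qdt (p : ℕ) : Qd p := SemidirectProduct.inl (Multiplicative.ofAdd ![1, 0])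

/-!
In `N ⋊ G` with `N` abelian, an element `(n, g)` commutes with `(m, 1)` exactly when
`g` fixes `m`, so `C_M(t)` is the preimage in `M` of the stabilizer of `(1,0)` in `SL(2,p)`. A matrix
of determinant one with first column `(1,0)` is `[[1,b],[0,1]] = α^b`, so that stabilizer is `⟨α⟩`,
and its preimage is `V⟨α⟩` since `V` is the kernel of the projection `M → SL(2,p)`.
-/

namespace SemidirectProduct

variable {N G : Type*} [Group G]

theorem commute_inl_iff [CommGroup N] {φ : G →* MulAut N} {n : N}
    {x : N ⋊[φ] G} : Commute (inl n) x ↔ φ x.right n = n := by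
  rw [Commute, SemiconjBy, SemidirectProduct.ext_iff]
  simp only [mul_left, mul_right, left_inl, right_inl, map_one, MulAut.one_apply, one_mul,
    mul_one, and_true, mul_comm n, mul_left_cancel_iff, eq_comm]

theorem range_inl_sup_map_inr [Group N] {φ : G →* MulAut N} (H : Subgroup G) :
    (inl : N →* N ⋊[φ] G).range ⊔ H.map inr = H.comap rightHom := by
  rw [range_inl_eq_ker_rightHom, sup_comm, ← Subgroup.comap_map_eq, Subgroup.map_map,
    rightHom_comp_inr, Subgroup.map_id]

end SemidirectProduct

theorem alphaSL_zpow (p : ℕ) (k : ℤ) :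
    ((alphaSL p ^ k : SL2 p) : Matrix (Fin 2) (Fin 2) (ZMod p)) = !![1, (k : ZMod p); 0, 1] := by
  induction k using Int.induction_on with
  | zero => simp [Matrix.one_fin_two]
  | succ k ih =>
    rw [zpow_add_one, Matrix.SpecialLinearGroup.coe_mul, ih]
    simp [alphaSL, add_comm]
  | pred k ih =>
    rw [zpow_sub_one, Matrix.SpecialLinearGroup.coe_mul, ih,
      Matrix.SpecialLinearGroup.coe_inv, Matrix.adjugate_fin_two]
    simp [alphaSL, sub_eq_neg_add]

theorem mulVec_one_zero_eq_iff_mem_zpowers_alphaSL (p : ℕ) (A : SL2 p) :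
    (A : Matrix (Fin 2) (Fin 2) (ZMod p)).mulVec ![1, 0] = ![1, 0] ↔
      A ∈ Subgroup.zpowers (alphaSL p) := by
  constructor
  · intro hA
    have h₀₀ : A 0 0 = 1 := by simpa [Matrix.mulVec, dotProduct] using congrFun hA 0
    have h₁₀ : A 1 0 = 0 := by simpa [Matrix.mulVec, dotProduct] using congrFun hA 1
    have h₁₁ : A 1 1 = 1 := by
      have hdet := A.det_coe
      rwa [Matrix.det_fin_two, h₀₀, h₁₀, one_mul, mul_zero, sub_zero] at hdet
    refine ⟨(A 0 1).cast, Subtype.ext ?_⟩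
    rw [alphaSL_zpow, ZMod.intCast_zmod_cast]
    ext i j
    fin_cases i <;> fin_cases j <;> simp [h₀₀, h₁₀, h₁₁]
  · rintro ⟨k, rfl⟩
    rw [alphaSL_zpow]
    ext i
    fin_cases i <;> simp

theorem statement11_general (p : ℕ) :
    Subgroup.centralizer ({Qdt p} : Set (Qd p)) = QdP p := by
  have hQdP : QdP p = (Subgroup.zpowers (alphaSL p)).comap SemidirectProduct.rightHom := by
    rw [QdP, QdV, Qdalpha, ← MonoidHom.map_zpowers, SemidirectProduct.range_inl_sup_map_inr]
  ext g
  rw [hQdP, Subgroup.mem_comap, SemidirectProduct.rightHom_eq_right,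
    ← mulVec_one_zero_eq_iff_mem_zpowers_alphaSL, Subgroup.mem_centralizer_singleton_iff, Qdt,
    eq_comm, ← commute_iff_eq, SemidirectProduct.commute_inl_iff]
  -- `sl2Phi p A (ofAdd v)` is `ofAdd (A *ᵥ v)` by definition
  exact Multiplicative.ofAdd.injective.eq_iff

/-- the centralizer of `t = ((1,0), I)` in `Qd(p)` equals the Sylow
`p`-subgroup `P = V⟨α⟩`. -/
theorem statement11 (p : ℕ) [Fact p.Prime] :
    Subgroup.centralizer ({Qdt p} : Set (Qd p)) = QdP p :=
  statement11_general p
end
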